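/- arXiv:0903.2651 — 4 statements merged into one kernel-verified Lean document; each statement's English description precedes it below -/
import Mathlib

section
/- For the multiscale area-interaction density p(X) = α λ^{N(X)} γ₁^{-m(X⊕G₁)} γ₂^{-m(X⊕G₂)} with γ₁ ≥ 1 and 0 < γ₂ ≤ 1, the Papangelou conditional intensity satisfies λ_p(u;X) = λ · γ₁^{-m((u⊕G₁)\(X⊕G₁))} · γ₂^{-m((u⊕G₂)\(X⊕G₂))} ≤ λ γ₂^{-m(G₂)} for all u and all finite configurations X. -/
open MeasureTheory Pointwise
open scoped Classical

/-- Euclidean space `ℝ^d`. -/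
abbrev Euc (d : ℕ) := EuclideanSpace ℝ (Fin d)

/-- Minkowski sum `X ⊕ G` of a finite configuration `X` with a set `G`
(`∅ ⊕ G = ∅`). -/
noncomputable def mink {d : ℕ} (X : Finset (Euc d)) (G : Set (Euc d)) : Set (Euc d) :=
  (X : Set (Euc d)) + G

/-- Lebesgue measure of a subset of `ℝ^d`, as a real number. -/
noncomputable def mv {d : ℕ} (A : Set (Euc d)) : ℝ := (volume A).toReal

lemma mink_compact {d : ℕ} (X : Finset (Euc d)) (c : Euc d) (r : ℝ) :
    IsCompact (mink X (Metric.closedBall c r)) :=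
  X.finite_toSet.isCompact.add (isCompact_closedBall c r)

lemma sing_compact {d : ℕ} (u c : Euc d) (r : ℝ) :
    IsCompact (({u} : Set (Euc d)) + Metric.closedBall c r) :=
  (isCompact_singleton).add (isCompact_closedBall c r)

lemma mink_insert {d : ℕ} (u : Euc d) (X : Finset (Euc d)) (G : Set (Euc d)) :
    mink (insert u X) G = (({u} : Set (Euc d)) + G) ∪ mink X G := by
  unfold mink
  rw [Finset.coe_insert, Set.insert_eq, Set.union_add]

lemma mv_split {d : ℕ} (u : Euc d) (X : Finset (Euc d)) (c : Euc d) (r : ℝ) :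
    mv (mink (insert u X) (Metric.closedBall c r)) =
      mv ((({u} : Set (Euc d)) + Metric.closedBall c r) \ mink X (Metric.closedBall c r)) +
      mv (mink X (Metric.closedBall c r)) := by
  set B := ({u} : Set (Euc d)) + Metric.closedBall c r
  set A := mink X (Metric.closedBall c r)
  have hA : MeasurableSet A := (mink_compact X c r).isClosed.measurableSet
  have h1 : B ∪ A = (B \ A) ∪ A := (Set.diff_union_self).symm
  rw [mink_insert, mv, h1, measure_union Set.disjoint_sdiff_left hA, mv, mv,
    ENNReal.toReal_add]
  · exact ((measure_mono Set.diff_subset).trans_lt (sing_compact u c r).measure_lt_top).ne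
  · exact (mink_compact X c r).measure_lt_top.ne

lemma mv_split' {d : ℕ} (u : Euc d) (X : Finset (Euc d)) (c : Euc d) (r : ℝ) :
    mv (mink (insert u X) (Metric.closedBall c r)) =
      mv (Metric.closedBall (u + c) r \ mink X (Metric.closedBall c r)) +
      mv (mink X (Metric.closedBall c r)) := by
  have := mv_split u X c r
  rwa [singleton_add_closedBall] at this

lemma mv_sing' {d : ℕ} (u c : Euc d) (r : ℝ) :
    mv (Metric.closedBall (u + c) r) = mv (Metric.closedBall c r) := by
  unfold mv
  rw [Measure.addHaar_closedBall_center, Measure.addHaar_closedBall_center volume c]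


/-- the Papangelou conditional intensity of the multiscale area-interaction
density `p(X) = α λ^{N(X)} γ₁^{-m(X⊕G₁)} γ₂^{-m(X⊕G₂)}` (with `γ₁ ≥ 1`, `0 < γ₂ ≤ 1`,
`G₁, G₂` closed balls) equals `λ γ₁^{-m((u⊕G₁)\(X⊕G₁))} γ₂^{-m((u⊕G₂)\(X⊕G₂))}` and is
bounded above by `λ γ₂^{-m(G₂)}`. -/
theorem stmt3 {d : ℕ} (α lam γ₁ γ₂ : ℝ) (hα : 0 < α) (hlam : 0 < lam)
    (hγ₁ : 1 ≤ γ₁) (hγ₂0 : 0 < γ₂) (hγ₂ : γ₂ ≤ 1)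
    (c₁ c₂ : Euc d) (r₁ r₂ : ℝ)
    (p : Finset (Euc d) → ℝ)
    (hp : ∀ X, p X = α * lam ^ X.card *
      γ₁ ^ (-(mv (mink X (Metric.closedBall c₁ r₁)))) *
      γ₂ ^ (-(mv (mink X (Metric.closedBall c₂ r₂)))))
    (u : Euc d) (X : Finset (Euc d)) (hu : u ∉ X) :
    p (insert u X) / p X =
      lam * γ₁ ^ (-(mv ((({u} : Set (Euc d)) + Metric.closedBall c₁ r₁) \
            mink X (Metric.closedBall c₁ r₁)))) *
        γ₂ ^ (-(mv ((({u} : Set (Euc d)) + Metric.closedBall c₂ r₂) \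
            mink X (Metric.closedBall c₂ r₂)))) ∧
    p (insert u X) / p X ≤ lam * γ₂ ^ (-(mv (Metric.closedBall c₂ r₂))) := by
  simp only [singleton_add_closedBall]
  have hγ₁0 : (0:ℝ) < γ₁ := lt_of_lt_of_le one_pos hγ₁
  set b₁ := mv (Metric.closedBall (u + c₁) r₁ \ mink X (Metric.closedBall c₁ r₁)) with hb₁
  set b₂ := mv (Metric.closedBall (u + c₂) r₂ \ mink X (Metric.closedBall c₂ r₂)) with hb₂
  have heq : p (insert u X) / p X = lam * γ₁ ^ (-b₁) * γ₂ ^ (-b₂) := by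
    rw [hp, hp, Finset.card_insert_of_notMem hu, mv_split', mv_split',
      neg_add, neg_add, Real.rpow_add hγ₁0, Real.rpow_add hγ₂0, pow_succ]
    have h1 : γ₁ ^ (-(mv (mink X (Metric.closedBall c₁ r₁)))) ≠ 0 :=
      (Real.rpow_pos_of_pos hγ₁0 _).ne'
    have h2 : γ₂ ^ (-(mv (mink X (Metric.closedBall c₂ r₂)))) ≠ 0 :=
      (Real.rpow_pos_of_pos hγ₂0 _).ne'
    field_simp
    ring
  refine ⟨heq, ?_⟩
  rw [heq]
  have hb₁0 : 0 ≤ b₁ := ENNReal.toReal_nonneg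
  have h1 : γ₁ ^ (-b₁) ≤ 1 :=
    Real.rpow_le_one_of_one_le_of_nonpos hγ₁ (neg_nonpos.mpr hb₁0)
  have hb₂le : b₂ ≤ mv (Metric.closedBall c₂ r₂) := by
    rw [hb₂, ← mv_sing' u c₂ r₂]
    exact ENNReal.toReal_mono (isCompact_closedBall _ _).measure_lt_top.ne
      (measure_mono Set.diff_subset)
  have h2 : γ₂ ^ (-b₂) ≤ γ₂ ^ (-(mv (Metric.closedBall c₂ r₂))) :=
    Real.rpow_le_rpow_of_exponent_ge hγ₂0 hγ₂ (neg_le_neg hb₂le)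
  calc lam * γ₁ ^ (-b₁) * γ₂ ^ (-b₂) ≤ lam * 1 * γ₂ ^ (-b₂) :=
        mul_le_mul_of_nonneg_right (mul_le_mul_of_nonneg_left h1 hlam.le)
          (Real.rpow_pos_of_pos hγ₂0 _).le
    _ ≤ lam * γ₂ ^ (-(mv (Metric.closedBall c₂ r₂))) := by
        rw [mul_one]
        exact mul_le_mul_of_nonneg_left h2 hlam.le
end

section
/- Let χ be a compact metric space, ν an outer regular finite Borel measure on χ, and Z: χ → K(χ) a continuous map into the space of compact subsets of χ with the Hausdorff (myopic) topology. For a finite configuration X ⊆ χ define U(X) = ⋃_{x∈X} Z(x). Then the map X ↦ ν(U(X)) is upper semicontinuous with respect to the weak topology on finite configurations: for every t > 0 and every configuration X with ν(U(X)) < t, there is an open set G ⊇ U(X) with ν(G) < t, the set H = {x ∈ χ : Z(x) ∩ Gᶜ ≠ ∅} is closed, X has no points in H, and every configuration Y with no points in H satisfies ν(U(Y)) ≤ ν(G) < t. -/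
open MeasureTheory TopologicalSpace
open scoped ENNReal

/-- for a compact metric space `χ`, an outer regular finite Borel measure `ν`,
and a continuous map `Z` into the nonempty compact subsets of `χ` (Hausdorff/myopic
topology), the map `X ↦ ν(⋃_{x∈X} Z(x))` is weakly upper semicontinuous: whenever
`ν(U(X)) < t` there is an open `G ⊇ U(X)` with `ν(G) < t` such that the hitting set
`H = {x : Z(x) ∩ Gᶜ ≠ ∅}` is closed, `X` has no points in `H`, and every configuration `Y`
with no points in `H` satisfies `ν(U(Y)) ≤ ν(G) < t`. -/
theorem stmt9 {χ : Type*} [MetricSpace χ] [CompactSpace χ] [MeasurableSpace χ] [BorelSpace χ]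
    (ν : Measure χ) [IsFiniteMeasure ν] [ν.OuterRegular]
    (Z : χ → NonemptyCompacts χ) (hZ : Continuous Z)
    (X : Finset χ) (t : ℝ≥0∞) (ht : 0 < t)
    (hX : ν (⋃ x ∈ X, (Z x : Set χ)) < t) :
    ∃ G : Set χ, IsOpen G ∧ (⋃ x ∈ X, (Z x : Set χ)) ⊆ G ∧ ν G < t ∧
      IsClosed {x : χ | ((Z x : Set χ) ∩ Gᶜ).Nonempty} ∧
      (∀ x ∈ X, x ∉ {x : χ | ((Z x : Set χ) ∩ Gᶜ).Nonempty}) ∧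
      ∀ Y : Finset χ, (∀ y ∈ Y, y ∉ {x : χ | ((Z x : Set χ) ∩ Gᶜ).Nonempty}) →
        ν (⋃ y ∈ Y, (Z y : Set χ)) ≤ ν G := by
  obtain ⟨G, hUG, hGopen, hGlt⟩ :=
    Set.exists_isOpen_lt_of_lt (⋃ x ∈ X, (Z x : Set χ)) t hX
  -- key: the non-hitting set is closed
  have hsub : ∀ x : χ, ((Z x : Set χ) ∩ Gᶜ).Nonempty ↔ ¬ (Z x : Set χ) ⊆ G := by
    intro x
    constructor
    · rintro ⟨p, hpZ, hpG⟩ h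
      exact hpG (h hpZ)
    · intro h
      rcases Set.not_subset.1 h with ⟨p, hpZ, hpG⟩
      exact ⟨p, hpZ, hpG⟩
  have hopen : IsOpen {x : χ | (Z x : Set χ) ⊆ G} := by
    rw [isOpen_iff_mem_nhds]
    intro x hx
    obtain ⟨δ, hδpos, hthick⟩ :=
      (Z x).isCompact.exists_thickening_subset_open hGopen hx
    have hcont : ∀ᶠ y in nhds x, edist (Z y) (Z x) < ENNReal.ofReal δ :=
      EMetric.tendsto_nhds.1 (hZ.tendsto x) _ (by simpa using hδpos)
    refine Filter.mem_of_superset hcont ?_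
    intro y hy
    refine subset_trans ?_ hthick
    intro p hp
    rw [Metric.mem_thickening_iff_infEdist_lt]
    calc EMetric.infEdist p (Z x : Set χ)
        ≤ EMetric.hausdorffEdist (Z y : Set χ) (Z x : Set χ) :=
          EMetric.infEdist_le_hausdorffEdist_of_mem hp
      _ = edist (Z y) (Z x) := rfl
      _ < ENNReal.ofReal δ := hy
  have hclosed : IsClosed {x : χ | ((Z x : Set χ) ∩ Gᶜ).Nonempty} := by
    have : {x : χ | ((Z x : Set χ) ∩ Gᶜ).Nonempty} = {x : χ | (Z x : Set χ) ⊆ G}ᶜ := by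
      ext x; simpa using hsub x
    rw [this]
    exact hopen.isClosed_compl
  refine ⟨G, hGopen, hUG, hGlt, hclosed, ?_, ?_⟩
  · intro x hxX hx
    rcases hx with ⟨p, hpZ, hpG⟩
    exact hpG (hUG (Set.mem_biUnion hxX hpZ))
  · intro Y hY
    refine measure_mono ?_
    intro p hp
    rcases Set.mem_iUnion₂.1 hp with ⟨y, hyY, hpZ⟩
    have := hY y hyY
    rw [Set.mem_setOf_eq, hsub y, not_not] at this
    exact this hpZ
end

section
/- For finite point configurations X ⊆ Y ⊆ Z in ℝ^d, a point u, and compact sets G₁, G₂, with γ₁ ≥ 1 and 0 < γ₂ ≤ 1, the acceptance probability b(u; L, U) = γ₁^{-m((u⊕G₁)\(U⊕G₁))} γ₂^{m(G₂)-m((u⊕G₂)\(L⊕G₂))}, normalized by the dominating rate, is monotone in the coupling sense: if L ⊆ L' ⊆ U' ⊆ U then b(u; L', U') ≤ b(u; L, U) and a(u; L', U') ≥ a(u; L, U), where a(u; L, U) = γ₁^{-m((u⊕G₁)\(L⊕G₁))} γ₂^{m(G₂)-m((u⊕G₂)\(U⊕G₂))}. -/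
open MeasureTheory Pointwise
open scoped Classical

lemma mv_diff_mono {d : ℕ} (G : Set (Euc d)) (hG : IsCompact G) (u : Euc d)
    {X Y : Finset (Euc d)} (h : X ⊆ Y) :
    mv ((({u} : Set (Euc d)) + G) \ mink Y G) ≤ mv ((({u} : Set (Euc d)) + G) \ mink X G) := by
  have hcomp : IsCompact (({u} : Set (Euc d)) + G) := (isCompact_singleton).add hG
  have hfin : volume ((({u} : Set (Euc d)) + G) \ mink X G) ≠ ⊤ := by
    have := hcomp.measure_lt_top (μ := volume)
    exact ne_top_of_le_ne_top this.ne (measure_mono Set.diff_subset)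
  have hsub : mink X G ⊆ mink Y G := by
    apply Set.add_subset_add_right
    exact_mod_cast h
  exact ENNReal.toReal_mono hfin (measure_mono (Set.diff_subset_diff_right hsub))

/-- monotonicity (funnelling) of the CFTP acceptance probabilities for the
multiscale area-interaction process: with `γ₁ ≥ 1`, `0 < γ₂ ≤ 1` and `L ⊆ L' ⊆ U' ⊆ U`,
the upper acceptance probability `b(u;L,U) = γ₁^{-m((u⊕G₁)\(U⊕G₁))} γ₂^{m(G₂)-m((u⊕G₂)\(L⊕G₂))}`
satisfies `b(u;L',U') ≤ b(u;L,U)`, and the lower one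
`a(u;L,U) = γ₁^{-m((u⊕G₁)\(L⊕G₁))} γ₂^{m(G₂)-m((u⊕G₂)\(U⊕G₂))}` satisfies
`a(u;L,U) ≤ a(u;L',U')`. -/
theorem stmt16 {d : ℕ} (γ₁ γ₂ : ℝ) (hγ₁ : 1 ≤ γ₁) (hγ₂0 : 0 < γ₂) (hγ₂ : γ₂ ≤ 1)
    (G₁ G₂ : Set (Euc d)) (hG₁ : IsCompact G₁) (hG₂ : IsCompact G₂)
    (u : Euc d) (L L' U' U : Finset (Euc d))
    (h1 : L ⊆ L') (h2 : L' ⊆ U') (h3 : U' ⊆ U)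
    (bfun afun : Finset (Euc d) → Finset (Euc d) → ℝ)
    (hbfun : ∀ Lo Up, bfun Lo Up =
      γ₁ ^ (-(mv ((({u} : Set (Euc d)) + G₁) \ mink Up G₁))) *
      γ₂ ^ (mv G₂ - mv ((({u} : Set (Euc d)) + G₂) \ mink Lo G₂)))
    (hafun : ∀ Lo Up, afun Lo Up =
      γ₁ ^ (-(mv ((({u} : Set (Euc d)) + G₁) \ mink Lo G₁))) *
      γ₂ ^ (mv G₂ - mv ((({u} : Set (Euc d)) + G₂) \ mink Up G₂))) :
    bfun L' U' ≤ bfun L U ∧ afun L U ≤ afun L' U' := by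
  have hγ₁0 : (0:ℝ) < γ₁ := lt_of_lt_of_le one_pos hγ₁
  constructor
  · rw [hbfun, hbfun]
    apply mul_le_mul
    · exact Real.rpow_le_rpow_of_exponent_le hγ₁
        (neg_le_neg (mv_diff_mono G₁ hG₁ u h3))
    · exact Real.rpow_le_rpow_of_exponent_ge hγ₂0 hγ₂
        (sub_le_sub_left (mv_diff_mono G₂ hG₂ u h1) _)
    · exact Real.rpow_nonneg hγ₂0.le _
    · exact Real.rpow_nonneg hγ₁0.le _
  · rw [hafun, hafun]
    apply mul_le_mul
    · exact Real.rpow_le_rpow_of_exponent_le hγ₁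
        (neg_le_neg (mv_diff_mono G₁ hG₁ u h1))
    · exact Real.rpow_le_rpow_of_exponent_ge hγ₂0 hγ₂
        (sub_le_sub_left (mv_diff_mono G₂ hG₂ u h3) _)
    · exact Real.rpow_nonneg hγ₂0.le _
    · exact Real.rpow_nonneg hγ₁0.le _
end

section
/- The multiscale area-interaction process density p(X) = α λ^{N(X)} γ₁^{-m(X⊕G₁)} γ₂^{-m(X⊕G₂)}, where G₁ and G₂ are closed balls of radii r₁ and r₂, is Markov of range R = max{r₁, r₂} in the Ripley–Kelly sense: the Papangelou conditional intensity λ_p(u;X) depends only on the points of X within distance 2R of u. -/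
open MeasureTheory Pointwise
open scoped Classical

lemma key_filter {d : ℕ} (u : Euc d) (X : Finset (Euc d)) (r R : ℝ) (hrR : r ≤ R) :
    (({u} : Set (Euc d)) + Metric.closedBall (0 : Euc d) r) \
      mink X (Metric.closedBall (0 : Euc d) r)
    = (({u} : Set (Euc d)) + Metric.closedBall (0 : Euc d) r) \
      mink (X.filter (fun x => dist x u ≤ 2 * R)) (Metric.closedBall (0 : Euc d) r) := by
  ext z
  simp only [Set.mem_diff, mink, Set.mem_add, Set.mem_singleton_iff, Metric.mem_closedBall,
    Finset.coe_filter, Set.mem_setOf_eq, Finset.mem_coe]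
  constructor
  · rintro ⟨hA, hB⟩
    refine ⟨hA, ?_⟩
    rintro ⟨x, ⟨hx, _⟩, b, hb, hxb⟩
    exact hB ⟨x, hx, b, hb, hxb⟩
  · rintro ⟨hA, hB⟩
    refine ⟨hA, ?_⟩
    rintro ⟨x, hx, b, hb, hxb⟩
    refine hB ⟨x, ⟨hx, ?_⟩, b, hb, hxb⟩
    obtain ⟨a, ha, c, hc, hac⟩ := hA
    have h1 : dist x z ≤ r := by
      rw [← hxb]; simpa [dist_eq_norm] using hb
    have h2 : dist z u ≤ r := by
      rw [← hac, ha]; simpa [dist_eq_norm] using hc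
    calc dist x u ≤ dist x z + dist z u := dist_triangle x z u
      _ ≤ r + r := add_le_add h1 h2
      _ ≤ 2 * R := by linarith

/-- the multiscale area-interaction process is Markov of range
`R = max{r₁, r₂}`: its Papangelou conditional intensity
`λ_p(u;X) = λ γ₁^{-m((u⊕G₁)\(X⊕G₁))} γ₂^{-m((u⊕G₂)\(X⊕G₂))}` (with `Gᵢ` the closed ball of
radius `rᵢ`) depends only on the points of `X` within distance `2R` of `u`. -/
theorem stmt17 {d : ℕ} (lam γ₁ γ₂ r₁ r₂ : ℝ) (hlam : 0 < lam)
    (hγ₁ : 1 ≤ γ₁) (hγ₂0 : 0 < γ₂) (hγ₂ : γ₂ ≤ 1) (hr₁ : 0 ≤ r₁) (hr₂ : 0 ≤ r₂)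
    (lamp : Euc d → Finset (Euc d) → ℝ)
    (hlamp : ∀ (u : Euc d) (X : Finset (Euc d)), lamp u X =
      lam * γ₁ ^ (-(mv ((({u} : Set (Euc d)) + Metric.closedBall (0 : Euc d) r₁) \
            mink X (Metric.closedBall (0 : Euc d) r₁)))) *
        γ₂ ^ (-(mv ((({u} : Set (Euc d)) + Metric.closedBall (0 : Euc d) r₂) \
            mink X (Metric.closedBall (0 : Euc d) r₂)))))
    (u : Euc d) (X Y : Finset (Euc d))
    (hXY : X.filter (fun x => dist x u ≤ 2 * max r₁ r₂) =
           Y.filter (fun x => dist x u ≤ 2 * max r₁ r₂)) :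
    lamp u X = lamp u Y := by
  rw [hlamp, hlamp,
    key_filter u X r₁ (max r₁ r₂) (le_max_left _ _),
    key_filter u X r₂ (max r₁ r₂) (le_max_right _ _),
    key_filter u Y r₁ (max r₁ r₂) (le_max_left _ _),
    key_filter u Y r₂ (max r₁ r₂) (le_max_right _ _), hXY]
end
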